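/- Let φ be an unsatisfiable CNF of primal treewidth at most k with n variables. Then there is a regular resolution refutation of φ of size O(2^k · n). -/

import Mathlib

def postorder {α : Type} : Tree α → List α
  | BinaryTree.nil => []
  | BinaryTree.node a l r => postorder l ++ postorder r ++ [a]

inductive IsSubtree {α : Type} : Tree α → Tree α → Prop
  | refl (t : Tree α) : IsSubtree t t
  | left {s l r : Tree α} {a : α} : IsSubtree s l → IsSubtree s (Tree.node a l r)
  | right {s l r : Tree α} {a : α} : IsSubtree s r → IsSubtree s (Tree.node a l r)

abbrev Lit : Type := ℕ × Bool
abbrev Clause : Type := Finset Lit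
abbrev CNF : Type := Finset Clause

def satClause (a : ℕ → Bool) (C : Clause) : Prop := ∃ l ∈ C, a l.1 = l.2
def satCNF (a : ℕ → Bool) (φ : CNF) : Prop := ∀ C ∈ φ, satClause a C
def UnsatCNF (φ : CNF) : Prop := ¬ ∃ a : ℕ → Bool, satCNF a φ
def varsC (C : Clause) : Finset ℕ := C.image Prod.fst
def varsCNF (φ : CNF) : Finset ℕ := φ.biUnion varsC
def WellFormed (S : Finset Lit) : Prop := ∀ x : ℕ, ¬((x, true) ∈ S ∧ (x, false) ∈ S)
def negLits (S : Finset Lit) : Finset Lit := S.image (fun l => (l.1, !l.2))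
def restrictCNF (φ : CNF) (S : Finset Lit) : CNF :=
  (φ.filter (fun C => C ∩ S = ∅)).image (fun C => C \ negLits S)

def occursV {V : Type} (v : V) (t : Tree (Finset V)) : Prop := ∃ B ∈ postorder t, v ∈ B

def rootBag {V : Type} : Tree (Finset V) → Finset V
  | BinaryTree.nil => ∅
  | BinaryTree.node B _ _ => B

def ConnIn {V : Type} (v : V) : Tree (Finset V) → Prop
  | BinaryTree.nil => True
  | BinaryTree.node B l r => ConnIn v l ∧ ConnIn v r ∧ (occursV v l → occursV v r → v ∈ B) ∧
      (v ∈ B → occursV v l → v ∈ rootBag l) ∧ (v ∈ B → occursV v r → v ∈ rootBag r)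

/-- Paths in a branching program: from node `i`, following the recorded literals, reach `j`. -/
inductive RPath {m : ℕ} (f : Fin m → (ℕ × Fin m × Fin m) ⊕ Clause) :
    Fin m → List Lit → Fin m → Prop
  | nil (i : Fin m) : RPath f i [] i
  | cons {i : Fin m} {x : ℕ} {i₀ i₁ : Fin m} {b : Bool} {L : List Lit} {j : Fin m}
      (h : f i = Sum.inl (x, i₀, i₁)) (hp : RPath f (bif b then i₁ else i₀) L j) :
      RPath f i ((x, b) :: L) j

/-- There is a regular resolution refutation of φ with at most `sz` nodes. -/
def HasRR (φ : CNF) (sz : ℕ) : Prop :=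
  ∃ (m : ℕ) (f : Fin m → (ℕ × Fin m × Fin m) ⊕ Clause) (s : Fin m),
    m ≤ sz ∧
    (∀ (i : Fin m) (x : ℕ) (i₀ i₁ : Fin m), f i = Sum.inl (x, i₀, i₁) → i < i₀ ∧ i < i₁) ∧
    (∀ (i : Fin m) (L : List Lit) (j : Fin m), RPath f i L j → (L.map Prod.fst).Nodup) ∧
    (∀ (L : List Lit) (j : Fin m) (C : Clause), RPath f s L j → f j = Sum.inr C →
      C ∈ φ ∧ ∀ l ∈ C, (l.1, !l.2) ∈ L)


/-!
The refutation is a read-once branching program that walks down one branch of the tree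
decomposition. At a subtree `s` it remembers only an assignment of the root bag of `s`, and
queries the unassigned variables of that bag in increasing order. Once the bag is fully
assigned, either a clause is falsified, or — since every clause lies inside the bag or inside
the subtree of one child — the assignments witnessing satisfiability of both children would
glue together; so some child stays unsatisfiable under its share of the assignment, and the walk
moves there, forgetting everything outside the child's root bag.

A query node is therefore a variable `x` together with an assignment of the variables of the
topmost bag of `x` that are assigned before `x` (those shared with the parent bag, and the
smaller new ones): at most `k` variables, hence at most `n · 2^k` query nodes, each with two
successors. Paths are read-once because the set of variables that remain to be queried loses
the queried variable along every edge.
-/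

open BinaryTree

section Bags

variable {V : Type}

@[simp]
lemma not_occursV_nil (v : V) : ¬ occursV v (nil : BinaryTree (Finset V)) := by
  simp [occursV, postorder]

@[simp]
lemma occursV_node {v : V} {B : Finset V} {l r : BinaryTree (Finset V)} :
    occursV v (node B l r) ↔ occursV v l ∨ occursV v r ∨ v ∈ B := by
  simp only [occursV, postorder, List.mem_append, List.mem_singleton]
  constructor
  · rintro ⟨B', (hB' | hB') | rfl, hv⟩
    exacts [Or.inl ⟨B', hB', hv⟩, Or.inr (Or.inl ⟨B', hB', hv⟩), Or.inr (Or.inr hv)]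
  · rintro (⟨B', hB', hv⟩ | ⟨B', hB', hv⟩ | hv)
    exacts [⟨B', Or.inl (Or.inl hB'), hv⟩, ⟨B', Or.inl (Or.inr hB'), hv⟩, ⟨B, Or.inr rfl, hv⟩]

lemma occursV_of_mem_rootBag {v : V} {s : BinaryTree (Finset V)} (h : v ∈ rootBag s) :
    occursV v s := by
  cases s with
  | nil => simp [rootBag] at h
  | node B l r => exact occursV_node.mpr (Or.inr (Or.inr h))

namespace IsSubtree

variable {α : Type} {s u t : BinaryTree α}

lemma trans (hsu : IsSubtree s u) (hut : IsSubtree u t) : IsSubtree s t := by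
  induction hut with
  | refl => exact hsu
  | left _ ih => exact ih.left
  | right _ ih => exact ih.right

lemma node_left {B : α} {l r : BinaryTree α} : IsSubtree l (node B l r) := (refl l).left

lemma node_right {B : α} {l r : BinaryTree α} : IsSubtree r (node B l r) := (refl r).right

lemma mem_postorder (h : IsSubtree s t) {B : α} (hB : B ∈ postorder s) : B ∈ postorder t := by
  induction h with
  | refl => exact hB
  | left _ ih => simp [postorder, ih]
  | right _ ih => simp [postorder, ih]

lemma rootBag_mem_postorder {s t : BinaryTree (Finset V)} (h : IsSubtree s t) (hs : s ≠ nil) :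
    rootBag s ∈ postorder t := by
  cases s with
  | nil => exact absurd rfl hs
  | node B l r => exact h.mem_postorder (by simp [postorder, rootBag])

lemma numNodes_le (h : IsSubtree s t) : s.numNodes ≤ t.numNodes := by
  induction h with
  | refl => rfl
  | left _ ih => simp only [numNodes]; omega
  | right _ ih => simp only [numNodes]; omega

end IsSubtree

lemma occursV.mono {v : V} {s t : BinaryTree (Finset V)} (hv : occursV v s) (h : IsSubtree s t) :
    occursV v t :=
  let ⟨B, hB, hvB⟩ := hv
  ⟨B, h.mem_postorder hB, hvB⟩

namespace ConnIn

variable {v : V} {B : Finset V} {l r c s t u : BinaryTree (Finset V)}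

lemma left (hv : ConnIn v (node B l r)) : ConnIn v l := hv.1

lemma right (hv : ConnIn v (node B l r)) : ConnIn v r := hv.2.1

lemma of_isSubtree (hv : ConnIn v t) (h : IsSubtree s t) : ConnIn v s := by
  induction h with
  | refl => exact hv
  | left _ ih => exact ih hv.left
  | right _ ih => exact ih hv.right

lemma mem_of_occursV_left_right (hv : ConnIn v (node B l r)) (hl : occursV v l)
    (hr : occursV v r) : v ∈ B :=
  hv.2.2.1 hl hr

lemma mem_rootBag_child (hv : ConnIn v (node B l r)) (hc : c = l ∨ c = r) (hB : v ∈ B)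
    (hvc : occursV v c) : v ∈ rootBag c := by
  rcases hc with rfl | rfl
  exacts [hv.2.2.2.1 hB hvc, hv.2.2.2.2 hB hvc]

lemma mem_rootBag_of_isSubtree (h : IsSubtree s u) (hv : ConnIn v u) (hu : v ∈ rootBag u)
    (hs : occursV v s) : v ∈ rootBag s := by
  induction h with
  | refl => exact hu
  | left h ih => exact ih hv.left (hv.mem_rootBag_child (Or.inl rfl) hu (hs.mono h))
  | right h ih => exact ih hv.right (hv.mem_rootBag_child (Or.inr rfl) hu (hs.mono h))

lemma notMem_of_notMem_rootBag (hv : ConnIn v (node B l r)) (hc : c = l ∨ c = r)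
    (h : IsSubtree s c) (hs : occursV v s) (hns : v ∉ rootBag s) : v ∉ B := fun hB => by
  have hvc : ConnIn v c := by rcases hc with rfl | rfl; exacts [hv.left, hv.right]
  exact hns (hvc.mem_rootBag_of_isSubtree h (hv.mem_rootBag_child hc hB (hs.mono h)) hs)

lemma mem_postorder_of_notMem_rootBag (h : IsSubtree s t) (hv : ConnIn v t)
    (hs : occursV v s) (hns : v ∉ rootBag s) {B' : Finset V} (hB' : B' ∈ postorder t)
    (hvB' : v ∈ B') : B' ∈ postorder s := by
  induction h with
  | refl => exact hB'
  | @left l r B h ih =>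
    have hB := hv.notMem_of_notMem_rootBag (Or.inl rfl) h hs hns
    simp only [postorder, List.mem_append, List.mem_singleton] at hB'
    rcases hB' with (hB' | hB') | rfl
    · exact ih hv.left hB'
    · exact absurd (hv.mem_of_occursV_left_right (hs.mono h) ⟨B', hB', hvB'⟩) hB
    · exact absurd hvB' hB
  | @right l r B h ih =>
    have hB := hv.notMem_of_notMem_rootBag (Or.inr rfl) h hs hns
    simp only [postorder, List.mem_append, List.mem_singleton] at hB'
    rcases hB' with (hB' | hB') | rfl
    · exact absurd (hv.mem_of_occursV_left_right ⟨B', hB', hvB'⟩ (hs.mono h)) hB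
    · exact ih hv.right hB'
    · exact absurd hvB' hB

end ConnIn

end Bags

section TopOcc

variable {V : Type} {v : V} {B : Finset V} {l r c s t : BinaryTree (Finset V)}

open Classical in
/-- Under `ConnIn v`, the unique subtree whose root bag contains `v` but whose parent bag does
not. -/
noncomputable def topOcc (v : V) : BinaryTree (Finset V) → BinaryTree (Finset V)
  | nil => nil
  | node B l r => if v ∈ B then node B l r else if occursV v l then topOcc v l else topOcc v r

lemma topOcc_of_mem_rootBag (h : v ∈ rootBag s) : topOcc v s = s := by
  cases s with
  | nil => rfl
  | node B l r => simp_all [topOcc, rootBag]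

lemma topOcc_node_of_notMem (hv : ConnIn v (node B l r)) (hB : v ∉ B) (hc : c = l ∨ c = r)
    (hvc : occursV v c) : topOcc v (node B l r) = topOcc v c := by
  rcases hc with rfl | rfl
  · simp [topOcc, hB, hvc]
  · have hl : ¬ occursV v l := fun hl => hB (hv.mem_of_occursV_left_right hl hvc)
    simp [topOcc, hB, hl]

lemma topOcc_spec (h : occursV v s) : v ∈ rootBag (topOcc v s) ∧ IsSubtree (topOcc v s) s := by
  induction s with
  | nil => simp at h
  | node B l r ihl ihr =>
    by_cases hB : v ∈ B
    · simpa [topOcc, hB, rootBag] using IsSubtree.refl _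
    by_cases hl : occursV v l
    · simpa [topOcc, hB, hl] using And.intro (ihl hl).1 (ihl hl).2.left
    · have hr : occursV v r := by simp_all
      simpa [topOcc, hB, hl] using And.intro (ihr hr).1 (ihr hr).2.right

lemma topOcc_eq_of_isSubtree (h : IsSubtree s t) (hv : ConnIn v t) (hs : occursV v s)
    (hns : v ∉ rootBag s) : topOcc v t = topOcc v s := by
  induction h with
  | refl => rfl
  | @left l r B h ih =>
    have hB := hv.notMem_of_notMem_rootBag (Or.inl rfl) h hs hns
    rw [topOcc_node_of_notMem hv hB (Or.inl rfl) (hs.mono h), ih hv.left]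
  | @right l r B h ih =>
    have hB := hv.notMem_of_notMem_rootBag (Or.inr rfl) h hs hns
    rw [topOcc_node_of_notMem hv hB (Or.inr rfl) (hs.mono h), ih hv.right]

lemma numNodes_le_topOcc (h : IsSubtree s t) (hv : ConnIn v t) (hs : v ∈ rootBag s) :
    s.numNodes ≤ (topOcc v t).numNodes := by
  induction h with
  | refl => rw [topOcc_of_mem_rootBag hs]
  | @left l r B h ih =>
    by_cases hB : v ∈ B
    · rw [topOcc_of_mem_rootBag (s := node B l r) hB]
      have := h.numNodes_le
      simp only [numNodes]; omega
    · rw [topOcc_node_of_notMem hv hB (Or.inl rfl) ((occursV_of_mem_rootBag hs).mono h)]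
      exact ih hv.left
  | @right l r B h ih =>
    by_cases hB : v ∈ B
    · rw [topOcc_of_mem_rootBag (s := node B l r) hB]
      have := h.numNodes_le
      simp only [numNodes]; omega
    · rw [topOcc_node_of_notMem hv hB (Or.inr rfl) ((occursV_of_mem_rootBag hs).mono h)]
      exact ih hv.right

lemma topOcc_eq_child_iff (h : IsSubtree (node B l r) t) (hv : ConnIn v t) (hc : c = l ∨ c = r)
    (hvc : v ∈ rootBag c) : topOcc v t = c ↔ v ∉ B := by
  constructor
  · intro htop hB
    have hle := numNodes_le_topOcc h hv (s := node B l r) hB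
    rw [htop] at hle
    rcases hc with rfl | rfl <;> simp only [numNodes] at hle <;> omega
  · intro hB
    have hcs : occursV v c := occursV_of_mem_rootBag hvc
    have hs : occursV v (node B l r) := by rcases hc with rfl | rfl <;> simp [hcs]
    rw [topOcc_eq_of_isSubtree h hv hs hB, topOcc_node_of_notMem (hv.of_isSubtree h) hB hc hcs,
      topOcc_of_mem_rootBag hvc]

end TopOcc

section Programs

variable {τ : Type} (next : τ → (ℕ × τ × τ) ⊕ Clause)

inductive ProgPath : τ → List Lit → τ → Prop
  | nil (a : τ) : ProgPath a [] a
  | cons {a : τ} {x : ℕ} {a₀ a₁ : τ} {b : Bool} {L : List Lit} {c : τ}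
      (h : next a = .inl (x, a₀, a₁)) (hp : ProgPath (bif b then a₁ else a₀) L c) :
      ProgPath a ((x, b) :: L) c

variable {next}

lemma ProgPath.nodup_of_potential {R : Finset τ} (fut : τ → Finset ℕ)
    (hstep : ∀ a ∈ R, ∀ x a₀ a₁, next a = .inl (x, a₀, a₁) → x ∈ fut a ∧
      ∀ b : Bool, (bif b then a₁ else a₀) ∈ R ∧ fut (bif b then a₁ else a₀) ⊆ (fut a).erase x)
    {a c : τ} {L : List Lit} (hp : ProgPath next a L c) (ha : a ∈ R) :
    (∀ v ∈ L.map Prod.fst, v ∈ fut a) ∧ (L.map Prod.fst).Nodup := by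
  induction hp with
  | nil => simp
  | @cons a x a₀ a₁ b L c h _ ih =>
    obtain ⟨hx, hchild⟩ := hstep a ha x a₀ a₁ h
    obtain ⟨hmem, hsub⟩ := hchild b
    obtain ⟨ihsub, ihnodup⟩ := ih hmem
    refine ⟨?_, List.nodup_cons.mpr ⟨fun hxL => ?_, ihnodup⟩⟩
    · simp only [List.map_cons, List.mem_cons, forall_eq_or_imp]
      exact ⟨hx, fun v hv => Finset.mem_of_mem_erase (hsub (ihsub v hv))⟩
    · exact (Finset.mem_erase.mp (hsub (ihsub x hxL))).1 rfl

lemma ProgPath.invariant (Good : Finset Lit → τ → Prop)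
    (hstep : ∀ S a x a₀ a₁ (b : Bool), Good S a → next a = .inl (x, a₀, a₁) →
      Good (insert (x, b) S) (bif b then a₁ else a₀))
    {a c : τ} {L : List Lit} (hp : ProgPath next a L c) {S : Finset Lit} (ha : Good S a) :
    Good (S ∪ L.toFinset) c := by
  induction hp generalizing S with
  | nil => simpa using ha
  | @cons a x a₀ a₁ b L c h _ ih =>
    simpa [List.toFinset_cons, Finset.union_insert, Finset.insert_union] using
      ih (hstep S a x a₀ a₁ b ha h)

lemma exists_equivFin_antitone_rank (R : Finset τ) (rk : τ → ℕ) :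
    ∃ e : R ≃ Fin R.card, ∀ a a' : R, rk a' < rk a → e a < e a' := by
  let key : R → Lex (ℕᵒᵈ × Fin R.card) := fun a => toLex (OrderDual.toDual (rk a), R.equivFin a)
  have hkey : Function.Injective key := fun a a' h =>
    R.equivFin.injective (congrArg (fun p => (ofLex p).2) h)
  let _ : LinearOrder R := LinearOrder.lift' key hkey
  let e : R ≃o Fin R.card := (Fintype.orderIsoFinOfCardEq R (Fintype.card_coe R)).symm
  exact ⟨e.toEquiv, fun a a' h => e.lt_iff_lt.mpr (Prod.Lex.lt_iff.mpr (Or.inl h))⟩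

variable (next) in
open Classical in
noncomputable def relabel (R : Finset τ) (e : R ≃ Fin R.card) (d : R) (i : Fin R.card) :
    (ℕ × Fin R.card × Fin R.card) ⊕ Clause :=
  let toR : τ → R := fun a => if h : a ∈ R then ⟨a, h⟩ else d
  (next (e.symm i)).map (fun p => (p.1, e (toR p.2.1), e (toR p.2.2))) id

section Relabel

variable {R : Finset τ} {e : R ≃ Fin R.card} {d : R} {i i₀ i₁ j : Fin R.card} {x : ℕ}
  {C : Clause}

lemma next_eq_of_relabel_eq_inl
    (hclosed : ∀ a ∈ R, ∀ x a₀ a₁, next a = .inl (x, a₀, a₁) → a₀ ∈ R ∧ a₁ ∈ R)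
    (h : relabel next R e d i = .inl (x, i₀, i₁)) :
    next (e.symm i) = .inl (x, e.symm i₀, e.symm i₁) := by
  rcases hn : next (e.symm i) with ⟨y, a₀, a₁⟩ | C
  · obtain ⟨h₀, h₁⟩ := hclosed _ (e.symm i).2 y a₀ a₁ hn
    simp only [relabel, hn, Sum.map_inl, Sum.inl.injEq, Prod.mk.injEq] at h
    obtain ⟨rfl, rfl, rfl⟩ := h
    simp [h₀, h₁]
  · simp [relabel, hn] at h

lemma next_eq_of_relabel_eq_inr (h : relabel next R e d i = .inr C) : next (e.symm i) = .inr C := by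
  rcases hn : next (e.symm i) with p | C'
  · simp [relabel, hn] at h
  · simpa [relabel, hn] using h

lemma RPath.progPath_of_relabel
    (hclosed : ∀ a ∈ R, ∀ x a₀ a₁, next a = .inl (x, a₀, a₁) → a₀ ∈ R ∧ a₁ ∈ R)
    {L : List Lit} (hp : RPath (relabel next R e d) i L j) :
    ProgPath next (e.symm i) L (e.symm j) := by
  induction hp with
  | nil => exact .nil _
  | @cons i x i₀ i₁ b L j h _ ih =>
    refine .cons (next_eq_of_relabel_eq_inl hclosed h) ?_
    cases b <;> exact ih

end Relabel

theorem hasRR_of_ranked {φ : CNF} (R : Finset τ) {s : τ} (hs : s ∈ R) (rk : τ → ℕ)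
    (hstep : ∀ a ∈ R, ∀ x a₀ a₁, next a = .inl (x, a₀, a₁) →
      ∀ b : Bool, (bif b then a₁ else a₀) ∈ R ∧ rk (bif b then a₁ else a₀) < rk a)
    (hreg : ∀ a ∈ R, ∀ L c, ProgPath next a L c → (L.map Prod.fst).Nodup)
    (hsound : ∀ L c C, ProgPath next s L c → next c = .inr C →
      C ∈ φ ∧ ∀ l ∈ C, (l.1, !l.2) ∈ L) :
    HasRR φ R.card := by
  obtain ⟨e, he⟩ := exists_equivFin_antitone_rank R rk
  have hclosed : ∀ a ∈ R, ∀ x a₀ a₁, next a = .inl (x, a₀, a₁) → a₀ ∈ R ∧ a₁ ∈ R :=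
    fun a ha x a₀ a₁ h => ⟨(hstep a ha x a₀ a₁ h false).1, (hstep a ha x a₀ a₁ h true).1⟩
  refine ⟨R.card, relabel next R e ⟨s, hs⟩, e ⟨s, hs⟩, le_rfl, fun i x i₀ i₁ h => ?_,
    fun i L j hp => hreg _ (e.symm i).2 L _ (hp.progPath_of_relabel hclosed),
    fun L j C hp hj => ?_⟩
  · have hn := next_eq_of_relabel_eq_inl hclosed h
    have hlt := fun b => (hstep _ (e.symm i).2 x _ _ hn b).2
    exact ⟨by simpa using he _ _ (hlt false), by simpa using he _ _ (hlt true)⟩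
  · have hp' := hp.progPath_of_relabel hclosed
    rw [e.symm_apply_apply] at hp'
    exact hsound L _ C hp' (next_eq_of_relabel_eq_inr hj)

end Programs

lemma HasRR.mono {φ : CNF} {m n : ℕ} (h : HasRR φ m) (hmn : m ≤ n) : HasRR φ n :=
  let ⟨m', f, s, hm', hrest⟩ := h
  ⟨m', f, s, hm'.trans hmn, hrest⟩

section Assignments

variable {γ γ' : Finset Lit} {C : Clause} {D S : Finset ℕ} {v : ℕ} {b : Bool}

lemma mem_varsC : v ∈ varsC C ↔ ∃ b, (v, b) ∈ C := by
  simp [varsC]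

lemma varsC_insert : varsC (insert (v, b) γ) = insert v (varsC γ) := by
  simp [varsC, Finset.image_insert]

def Falsifies (γ : Finset Lit) (C : Clause) : Prop := ∀ l ∈ C, (l.1, !l.2) ∈ γ

def Extends (a : ℕ → Bool) (γ : Finset Lit) : Prop := ∀ l ∈ γ, a l.1 = l.2

def restrictTo (S : Finset ℕ) (γ : Finset Lit) : Finset Lit := γ.filter (·.1 ∈ S)

lemma restrictTo_subset : restrictTo S γ ⊆ γ := Finset.filter_subset _ _

lemma mem_restrictTo {l : Lit} : l ∈ restrictTo S γ ↔ l ∈ γ ∧ l.1 ∈ S := Finset.mem_filter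

lemma varsC_restrictTo : varsC (restrictTo S γ) = varsC γ ∩ S := by
  ext z
  simp only [mem_varsC, mem_restrictTo, Finset.mem_inter]
  exact ⟨fun ⟨b, hb, hz⟩ => ⟨⟨b, hb⟩, hz⟩, fun ⟨⟨b, hb⟩, hz⟩ => ⟨b, hb, hz⟩⟩

lemma WellFormed.mono (h : WellFormed γ') (hγ : γ ⊆ γ') : WellFormed γ :=
  fun x hx => h x ⟨hγ hx.1, hγ hx.2⟩

lemma WellFormed.insert (h : WellFormed γ) (hv : v ∉ varsC γ) : WellFormed (insert (v, b) γ) := by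
  intro z ⟨ht, hf⟩
  rw [Finset.mem_insert] at ht hf
  by_cases hz : z = v
  · subst hz
    rcases ht with ht | ht
    · rcases hf with hf | hf
      · simp [← hf] at ht
      · exact hv (mem_varsC.mpr ⟨false, hf⟩)
    · exact hv (mem_varsC.mpr ⟨true, ht⟩)
  · exact h z ⟨ht.resolve_left (by simp [hz]), hf.resolve_left (by simp [hz])⟩

lemma WellFormed.mem_false_iff (h : WellFormed γ) :
    (v, false) ∈ γ ↔ v ∈ varsC γ ∧ (v, true) ∉ γ := by
  refine ⟨fun hf => ⟨mem_varsC.mpr ⟨false, hf⟩, fun ht => h v ⟨ht, hf⟩⟩, fun ⟨hv, ht⟩ => ?_⟩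
  obtain ⟨b, hb⟩ := mem_varsC.mp hv
  cases b
  · exact hb
  · exact absurd hb ht

lemma WellFormed.extends_decide (h : WellFormed γ) :
    Extends (fun v => decide ((v, true) ∈ γ)) γ := by
  rintro ⟨v, b⟩ hl
  cases b
  · simpa using ((h.mem_false_iff).mp hl).2
  · simpa using hl

open Classical in
/-- The total assignments of `D`, as literal sets. -/
noncomputable def fullAssignments (D : Finset ℕ) : Finset (Finset Lit) :=
  (D ×ˢ Finset.univ).powerset.filter fun γ => varsC γ = D ∧ WellFormed γ

lemma mem_fullAssignments : γ ∈ fullAssignments D ↔ varsC γ = D ∧ WellFormed γ := by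
  simp only [fullAssignments, Finset.mem_filter, Finset.mem_powerset, and_iff_right_iff_imp]
  rintro ⟨rfl, -⟩ ⟨v, b⟩ hl
  exact Finset.mem_product.mpr ⟨mem_varsC.mpr ⟨b, hl⟩, Finset.mem_univ b⟩

/-- A total assignment of `D` is determined by the variables it sets to `true`. -/
lemma card_fullAssignments_le : (fullAssignments D).card ≤ 2 ^ D.card := by
  rw [← Finset.card_powerset]
  refine Finset.card_le_card_of_injOn (fun γ => D.filter fun z => (z, true) ∈ γ) ?_ ?_
  · intro γ _
    simp only [Finset.coe_powerset, Set.mem_preimage, Set.mem_powerset_iff, Finset.coe_subset]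
    exact Finset.filter_subset _ D
  · intro γ hγ γ' hγ' hpos
    obtain ⟨hD, hwf⟩ := mem_fullAssignments.mp hγ
    obtain ⟨hD', hwf'⟩ := mem_fullAssignments.mp hγ'
    have htrue : ∀ z, (z, true) ∈ γ ↔ (z, true) ∈ γ' := fun z => by
      have := congrArg (z ∈ ·) hpos
      simp only [Finset.mem_filter, eq_iff_iff] at this
      constructor
      · intro h; exact (this.mp ⟨hD ▸ mem_varsC.mpr ⟨true, h⟩, h⟩).2
      · intro h; exact (this.mpr ⟨hD' ▸ mem_varsC.mpr ⟨true, h⟩, h⟩).2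
    ext ⟨z, b⟩
    cases b
    · rw [hwf.mem_false_iff, hwf'.mem_false_iff, hD, hD', htrue]
    · exact htrue z

end Assignments

section Search

variable (φ : CNF) (t : BinaryTree (Finset ℕ))

def bagVars (s : BinaryTree (Finset ℕ)) : Finset ℕ := rootBag s ∩ varsCNF φ

open Classical in
noncomputable def occVars (s : BinaryTree (Finset ℕ)) : Finset ℕ :=
  (varsCNF φ).filter (occursV · s)

def UnsatBelow (s : BinaryTree (Finset ℕ)) (γ : Finset Lit) : Prop :=
  ¬ ∃ a, Extends a γ ∧ ∀ C ∈ φ, (∀ v ∈ varsC C, occursV v s) → satClause a C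

/-- The variables of the root bag of `s` already assigned when the search at `s` is about to
query `m`: those inherited from the parent bag, and the new ones below `m`. -/
noncomputable def assignedAt (s : BinaryTree (Finset ℕ)) (m : ℕ) : Finset ℕ :=
  (bagVars φ s).filter fun y => topOcc y t ≠ s ∨ y < m

open Classical in
noncomputable def falsifiedClause (γ : Finset Lit) : Clause :=
  if h : ∃ C ∈ φ, Falsifies γ C then h.choose else ∅

open Classical in
noncomputable def descend : BinaryTree (Finset ℕ) → Finset Lit → (ℕ × Finset Lit) ⊕ Clause
  | nil, γ => .inr (falsifiedClause φ γ)
  | node B l r, γ =>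
    if h : ((B ∩ varsCNF φ) \ varsC γ).Nonempty then .inl (((B ∩ varsCNF φ) \ varsC γ).min' h, γ)
    else if UnsatBelow φ l (restrictTo (rootBag l) γ) then descend l (restrictTo (rootBag l) γ)
    else if UnsatBelow φ r (restrictTo (rootBag r) γ) then descend r (restrictTo (rootBag r) γ)
    else .inr (falsifiedClause φ γ)

open Classical in
noncomputable def queries : Finset (ℕ × Finset Lit) :=
  ((varsCNF φ).biUnion fun x =>
    (fullAssignments (assignedAt φ t (topOcc x t) x)).image (Prod.mk x)).filter
    fun q => UnsatBelow φ (topOcc q.1 t) q.2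

def Supported (S : Finset Lit) : (ℕ × Finset Lit) ⊕ Clause → Prop
  | .inl q => q ∈ queries φ t ∧ q.2 ⊆ S
  | .inr C => C ∈ φ ∧ Falsifies S C

noncomputable def pending : (ℕ × Finset Lit) ⊕ Clause → Finset ℕ
  | .inl q => occVars φ (topOcc q.1 t) \ varsC q.2
  | .inr _ => ∅

structure Admissible (s : BinaryTree (Finset ℕ)) (γ : Finset Lit) : Prop where
  isSubtree : IsSubtree s t
  wellFormed : WellFormed γ
  exists_eq_assignedAt : ∃ m, varsC γ = assignedAt φ t s m

variable {φ t} {s c l r : BinaryTree (Finset ℕ)} {B : Finset ℕ} {γ γ' : Finset Lit}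
  {x m : ℕ}

lemma mem_occVars : x ∈ occVars φ s ↔ x ∈ varsCNF φ ∧ occursV x s := by
  simp [occVars]

lemma assignedAt_subset : assignedAt φ t s m ⊆ bagVars φ s := Finset.filter_subset _ _

lemma falsifiedClause_spec (h : ∃ C ∈ φ, Falsifies γ C) :
    falsifiedClause φ γ ∈ φ ∧ Falsifies γ (falsifiedClause φ γ) := by
  rw [falsifiedClause, dif_pos h]
  exact h.choose_spec

lemma mem_queries :
    (x, γ) ∈ queries φ t ↔ x ∈ varsCNF φ ∧ varsC γ = assignedAt φ t (topOcc x t) x ∧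
      WellFormed γ ∧ UnsatBelow φ (topOcc x t) γ := by
  simp only [queries, Finset.mem_filter, Finset.mem_biUnion, Finset.mem_image, Prod.mk.injEq,
    mem_fullAssignments]
  constructor
  · rintro ⟨⟨y, hy, γ, ⟨hdom, hwf⟩, rfl, rfl⟩, hU⟩
    exact ⟨hy, hdom, hwf, hU⟩
  · rintro ⟨hx, hdom, hwf, hU⟩
    exact ⟨⟨x, hx, γ, ⟨hdom, hwf⟩, rfl, rfl⟩, hU⟩

lemma Supported.mono {o : (ℕ × Finset Lit) ⊕ Clause} (h : Supported φ t γ o) (hγ : γ ⊆ γ') :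
    Supported φ t γ' o := by
  cases o with
  | inl q => exact ⟨h.1, h.2.trans hγ⟩
  | inr C => exact ⟨h.1, fun l hl => hγ (h.2 l hl)⟩

lemma UnsatBelow.mono (h : UnsatBelow φ s γ) (hγ : γ ⊆ γ') : UnsatBelow φ s γ' :=
  fun ⟨a, ha, hsat⟩ => h ⟨a, fun l hl => ha l (hγ hl), hsat⟩

lemma unsatBelow_of_unsatCNF (hocc : ∀ x ∈ varsCNF φ, occursV x t) (hU : UnsatCNF φ) :
    UnsatBelow φ t ∅ :=
  fun ⟨a, _, hsat⟩ => hU ⟨a, fun C hC =>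
    hsat C hC fun v hv => hocc v (Finset.mem_biUnion.mpr ⟨C, hC, hv⟩)⟩

end Search

section SearchLemmas

variable {φ : CNF} {t s c l r : BinaryTree (Finset ℕ)} {B : Finset ℕ} {γ : Finset Lit} {C : Clause}

lemma varsC_subset_varsCNF (hC : C ∈ φ) : varsC C ⊆ varsCNF φ :=
  fun _ hv => Finset.mem_biUnion.mpr ⟨C, hC, hv⟩

lemma occursV_child_of_mem_shared_bag (hconn : ∀ x, ConnIn x t) (h : IsSubtree (node B l r) t)
    (hc : c = l ∨ c = r) {w u : ℕ} (hw : occursV w c) (hwB : w ∉ B) {B' : Finset ℕ}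
    (hB' : B' ∈ postorder t) (hwB' : w ∈ B') (huB' : u ∈ B') : occursV u c := by
  have hws : occursV w (node B l r) := by rcases hc with rfl | rfl <;> simp [hw]
  have hconn' := (hconn w).of_isSubtree h
  have hB's := (hconn w).mem_postorder_of_notMem_rootBag h hws hwB hB' hwB'
  simp only [postorder, List.mem_append, List.mem_singleton] at hB's
  rcases hB's with (hl | hr) | rfl
  · rcases hc with rfl | rfl
    · exact ⟨B', hl, huB'⟩
    · exact absurd (hconn'.mem_of_occursV_left_right ⟨B', hl, hwB'⟩ hw) hwB
  · rcases hc with rfl | rfl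
    · exact absurd (hconn'.mem_of_occursV_left_right hw ⟨B', hr, hwB'⟩) hwB
    · exact ⟨B', hr, huB'⟩
  · exact absurd hwB' hwB

/-- A clause whose variables pairwise share a bag, one of which leaves the root bag into a
child, lives entirely in that child. -/
lemma varsC_subset_or_occursV_child (hconn : ∀ x, ConnIn x t)
    (hpair : ∀ C ∈ φ, ∀ x ∈ varsC C, ∀ y ∈ varsC C, ∃ B ∈ postorder t, x ∈ B ∧ y ∈ B)
    (h : IsSubtree (node B l r) t) (hC : C ∈ φ)
    (hCs : ∀ v ∈ varsC C, occursV v (node B l r)) :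
    varsC C ⊆ B ∨ (∀ v ∈ varsC C, occursV v l) ∨ (∀ v ∈ varsC C, occursV v r) := by
  have hchild : ∀ c, (c = l ∨ c = r) → (∃ w ∈ varsC C, occursV w c ∧ w ∉ B) →
      ∀ v ∈ varsC C, occursV v c := by
    rintro c hc ⟨w, hwC, hw, hwB⟩ v hv
    obtain ⟨B', hB', hwB', hvB'⟩ := hpair C hC w hwC v hv
    exact occursV_child_of_mem_shared_bag hconn h hc hw hwB hB' hwB' hvB'
  by_cases hl : ∃ w ∈ varsC C, occursV w l ∧ w ∉ B
  · exact Or.inr (Or.inl (hchild l (Or.inl rfl) hl))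
  by_cases hr : ∃ w ∈ varsC C, occursV w r ∧ w ∉ B
  · exact Or.inr (Or.inr (hchild r (Or.inr rfl) hr))
  push Not at hl hr
  refine Or.inl fun v hv => ?_
  rcases occursV_node.mp (hCs v hv) with h' | h' | h'
  exacts [hl v hv h', hr v hv h', h']

lemma exists_falsifies_of_unsatBelow_nil (hwf : WellFormed γ) (hU : UnsatBelow φ nil γ) :
    ∃ C ∈ φ, Falsifies γ C := by
  by_contra hnf
  refine hU ⟨_, hwf.extends_decide, fun C hC hCs => ?_⟩
  have hCe : C = ∅ := Finset.eq_empty_of_forall_notMem fun p hp =>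
    not_occursV_nil _ (hCs p.1 (mem_varsC.mpr ⟨p.2, hp⟩))
  exact absurd ⟨C, hC, fun p hp => by simp [hCe] at hp⟩ hnf

lemma satClause_of_not_falsifies {a : ℕ → Bool} (ha : Extends a γ) (hC : varsC C ⊆ varsC γ)
    (hnf : ¬ Falsifies γ C) : satClause a C := by
  obtain ⟨p, hp, hpγ⟩ : ∃ p ∈ C, (p.1, !p.2) ∉ γ := by
    by_contra! hall
    exact hnf hall
  obtain ⟨b, hb⟩ := mem_varsC.mp (hC (mem_varsC.mpr ⟨p.2, hp⟩))
  have hbp : b = p.2 := by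
    cases b <;> cases hp2 : p.2 <;> simp_all
  exact ⟨p, hp, hbp ▸ ha _ hb⟩

lemma Extends.apply_eq_of_child (hconn : ∀ x, ConnIn x t) (h : IsSubtree (node B l r) t)
    (hdom : varsC γ = bagVars φ (node B l r)) (hc : c = l ∨ c = r) {a : ℕ → Bool}
    (ha : Extends a (restrictTo (rootBag c) γ)) ⦃v : ℕ⦄ ⦃b : Bool⦄ (hvb : (v, b) ∈ γ)
    (hvc : occursV v c) : a v = b := by
  have hvB : v ∈ B := (Finset.mem_inter.mp (hdom ▸ mem_varsC.mpr ⟨b, hvb⟩)).1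
  exact ha (v, b)
    (mem_restrictTo.mpr ⟨hvb, ((hconn v).of_isSubtree h).mem_rootBag_child hc hvB hvc⟩)

/-- If neither child is unsatisfiable under its share of a full assignment `γ` of the root bag,
the two satisfying assignments agree on the bag, and glued along it they satisfy every clause
of the subtree (`varsC_subset_or_occursV_child`) unless `γ` falsifies a clause. -/
lemma exists_falsifies_of_unsatBelow_node (hconn : ∀ x, ConnIn x t)
    (hpair : ∀ C ∈ φ, ∀ x ∈ varsC C, ∀ y ∈ varsC C, ∃ B ∈ postorder t, x ∈ B ∧ y ∈ B)
    (h : IsSubtree (node B l r) t) (hwf : WellFormed γ)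
    (hdom : varsC γ = bagVars φ (node B l r)) (hU : UnsatBelow φ (node B l r) γ)
    (hl : ¬ UnsatBelow φ l (restrictTo (rootBag l) γ))
    (hr : ¬ UnsatBelow φ r (restrictTo (rootBag r) γ)) :
    ∃ C ∈ φ, Falsifies γ C := by
  classical
  obtain ⟨al, hal, hsatl⟩ := not_not.mp hl
  obtain ⟨ar, har, hsatr⟩ := not_not.mp hr
  have hagl := hal.apply_eq_of_child hconn h hdom (.inl rfl)
  have hagr := har.apply_eq_of_child hconn h hdom (.inr rfl)
  let a : ℕ → Bool := fun v =>
    if occursV v l then al v else if occursV v r then ar v else decide ((v, true) ∈ γ)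
  have ha : Extends a γ := by
    rintro ⟨v, b⟩ hvb
    simp only [a]
    split_ifs with hvl hvr
    exacts [hagl hvb hvl, hagr hvb hvr, hwf.extends_decide _ hvb]
  by_contra hnf
  refine hU ⟨a, ha, fun C hC hCs => ?_⟩
  have hCφ := varsC_subset_varsCNF hC
  rcases varsC_subset_or_occursV_child hconn hpair h hC hCs with hCB | hCl | hCr
  · refine satClause_of_not_falsifies ha (fun v hv => ?_) fun hf => hnf ⟨C, hC, hf⟩
    exact hdom ▸ Finset.mem_inter.mpr ⟨hCB hv, hCφ hv⟩
  · obtain ⟨p, hp, hsat⟩ := hsatl C hC hCl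
    exact ⟨p, hp, by simpa [a, hCl p.1 (mem_varsC.mpr ⟨p.2, hp⟩)] using hsat⟩
  · obtain ⟨p, hp, hsat⟩ := hsatr C hC hCr
    have hpC : p.1 ∈ varsC C := mem_varsC.mpr ⟨p.2, hp⟩
    refine ⟨p, hp, ?_⟩
    by_cases hpl : occursV p.1 l
    · have hpB := ((hconn p.1).of_isSubtree h).mem_of_occursV_left_right hpl (hCr p.1 hpC)
      obtain ⟨b, hb⟩ : ∃ b, (p.1, b) ∈ γ :=
        mem_varsC.mp (hdom ▸ Finset.mem_inter.mpr ⟨hpB, hCφ hpC⟩)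
      simpa [a, hpl, hagl hb hpl, ← hagr hb (hCr p.1 hpC)] using hsat
    · simpa [a, hpl, hCr p.1 hpC] using hsat

end SearchLemmas

section Descend

variable {φ : CNF} {t s c l r : BinaryTree (Finset ℕ)} {B : Finset ℕ} {γ : Finset Lit} {x : ℕ}

lemma admissible_root : Admissible φ t t ∅ := by
  refine ⟨.refl t, fun x h => by simp at h, 0, ?_⟩
  symm
  simp only [varsC, Finset.image_empty]
  refine Finset.filter_false_of_mem fun y hy => ?_
  simp [topOcc_of_mem_rootBag (Finset.mem_inter.mp hy).1]

lemma Admissible.child (hconn : ∀ x, ConnIn x t) (hadm : Admissible φ t (node B l r) γ)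
    (hdom : varsC γ = bagVars φ (node B l r)) (hc : c = l ∨ c = r) :
    Admissible φ t c (restrictTo (rootBag c) γ) := by
  obtain ⟨h, hwf, -⟩ := hadm
  have hct : IsSubtree c t := by
    rcases hc with rfl | rfl
    exacts [IsSubtree.node_left.trans h, IsSubtree.node_right.trans h]
  refine ⟨hct, hwf.mono restrictTo_subset, 0, ?_⟩
  ext y
  simp only [varsC_restrictTo, hdom, assignedAt, bagVars, rootBag, Finset.mem_inter,
    Finset.mem_filter, Nat.not_lt_zero, or_false]
  constructor
  · rintro ⟨⟨hB, hV⟩, hyc⟩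
    exact ⟨⟨hyc, hV⟩, fun htop => (topOcc_eq_child_iff h (hconn y) hc hyc).mp htop hB⟩
  · rintro ⟨⟨hyc, hV⟩, htop⟩
    exact ⟨⟨not_not.mp (mt (topOcc_eq_child_iff h (hconn y) hc hyc).mpr htop), hV⟩, hyc⟩

lemma occVars_sdiff_child_subset (hconn : ∀ x, ConnIn x t) (h : IsSubtree (node B l r) t)
    (hdom : varsC γ = bagVars φ (node B l r)) (hc : c = l ∨ c = r) :
    occVars φ c \ varsC (restrictTo (rootBag c) γ) ⊆ occVars φ (node B l r) \ varsC γ := by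
  intro v hv
  simp only [Finset.mem_sdiff, mem_occVars, varsC_restrictTo, Finset.mem_inter] at hv ⊢
  obtain ⟨⟨hV, hvc⟩, hnot⟩ := hv
  refine ⟨⟨hV, by rcases hc with rfl | rfl <;> simp [hvc]⟩, fun hγ => hnot ⟨hγ, ?_⟩⟩
  have hvB : v ∈ B := by
    rw [hdom] at hγ
    exact (Finset.mem_inter.mp hγ).1
  exact ((hconn v).of_isSubtree h).mem_rootBag_child hc hvB hvc

lemma Admissible.query (hadm : Admissible φ t s γ) (hx : x ∈ bagVars φ s \ varsC γ)
    (hmin : ∀ y ∈ bagVars φ s \ varsC γ, x ≤ y) :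
    topOcc x t = s ∧ varsC γ = assignedAt φ t s x := by
  obtain ⟨-, -, m, hm⟩ := hadm
  obtain ⟨hxs, hxγ⟩ := Finset.mem_sdiff.mp hx
  have hxm : topOcc x t = s ∧ m ≤ x := by
    rw [hm] at hxγ
    simpa [assignedAt, hxs] using hxγ
  refine ⟨hxm.1, ?_⟩
  ext y
  by_cases hys : y ∈ bagVars φ s
  · by_cases hyγ : y ∈ varsC γ
    · have hy := hm ▸ hyγ
      simp only [assignedAt, Finset.mem_filter] at hy ⊢
      exact ⟨fun _ => ⟨hys, hy.2.imp_right (by omega)⟩, fun _ => hyγ⟩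
    · have hxy := hmin y (Finset.mem_sdiff.mpr ⟨hys, hyγ⟩)
      have hy : ¬ (topOcc y t ≠ s ∨ y < m) := fun hy =>
        hyγ (hm ▸ Finset.mem_filter.mpr ⟨hys, hy⟩)
      push Not at hy
      simp only [assignedAt, Finset.mem_filter, hyγ, false_iff, hy.1, ne_eq, not_true_eq_false,
        false_or, not_and, not_lt]
      exact fun _ => hxy
  · exact ⟨fun hy => absurd ((hm ▸ hy : y ∈ assignedAt φ t s m) |> assignedAt_subset) hys,
      fun hy => absurd (assignedAt_subset hy) hys⟩

lemma admissible_query (hocc : ∀ x ∈ varsCNF φ, occursV x t) {q : ℕ × Finset Lit}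
    (hq : q ∈ queries φ t) (b : Bool) :
    Admissible φ t (topOcc q.1 t) (insert (q.1, b) q.2) := by
  obtain ⟨x, γ⟩ := q
  obtain ⟨hx, hdom, hwf, -⟩ := mem_queries.mp hq
  obtain ⟨hxroot, hsub⟩ := topOcc_spec (hocc x hx)
  have hxγ : x ∉ varsC γ := by simp [hdom, assignedAt]
  refine ⟨hsub, hwf.insert hxγ, x + 1, ?_⟩
  rw [varsC_insert, hdom]
  ext y
  simp only [Finset.mem_insert, assignedAt, Finset.mem_filter, bagVars, Finset.mem_inter]
  constructor
  · rintro (rfl | ⟨hy, hy'⟩)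
    · exact ⟨⟨hxroot, hx⟩, Or.inr (Nat.lt_succ_self _)⟩
    · exact ⟨hy, hy'.imp_right fun h => by omega⟩
  · rintro ⟨hy, hy' | hy'⟩
    · exact Or.inr ⟨hy, Or.inl hy'⟩
    · rcases Nat.lt_succ_iff_lt_or_eq.mp hy' with h | rfl
      · exact Or.inr ⟨hy, Or.inr h⟩
      · exact Or.inl rfl

theorem descend_spec (hconn : ∀ x, ConnIn x t)
    (hpair : ∀ C ∈ φ, ∀ x ∈ varsC C, ∀ y ∈ varsC C, ∃ B ∈ postorder t, x ∈ B ∧ y ∈ B)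
    (hadm : Admissible φ t s γ) (hU : UnsatBelow φ s γ) :
    Supported φ t γ (descend φ s γ) ∧ pending φ t (descend φ s γ) ⊆ occVars φ s \ varsC γ := by
  induction s generalizing γ with
  | nil =>
    exact ⟨falsifiedClause_spec (exists_falsifies_of_unsatBelow_nil hadm.wellFormed hU),
      Finset.empty_subset _⟩
  | node B l r ihl ihr =>
    by_cases hq : ((B ∩ varsCNF φ) \ varsC γ).Nonempty
    · obtain ⟨htop, hdom⟩ := hadm.query (Finset.min'_mem _ hq) (Finset.min'_le _)
      rw [descend, dif_pos hq]
      refine ⟨⟨mem_queries.mpr ⟨?_, htop ▸ hdom, hadm.wellFormed, htop ▸ hU⟩, subset_rfl⟩, ?_⟩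
      · exact (Finset.mem_inter.mp (Finset.mem_sdiff.mp (Finset.min'_mem _ hq)).1).2
      · simp [pending, htop]
    have hdom : varsC γ = bagVars φ (node B l r) := by
      obtain ⟨-, -, m, hm⟩ := hadm
      refine subset_antisymm (hm ▸ assignedAt_subset) ?_
      exact Finset.sdiff_eq_empty_iff_subset.mp (Finset.not_nonempty_iff_eq_empty.mp hq)
    have hchild : ∀ c, (c = l ∨ c = r) →
        Supported φ t (restrictTo (rootBag c) γ) (descend φ c (restrictTo (rootBag c) γ)) ∧
          pending φ t (descend φ c (restrictTo (rootBag c) γ)) ⊆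
            occVars φ c \ varsC (restrictTo (rootBag c) γ) →
        Supported φ t γ (descend φ c (restrictTo (rootBag c) γ)) ∧
          pending φ t (descend φ c (restrictTo (rootBag c) γ)) ⊆
            occVars φ (node B l r) \ varsC γ :=
      fun c hc ⟨hsup, hpend⟩ => ⟨hsup.mono restrictTo_subset,
        hpend.trans (occVars_sdiff_child_subset hconn hadm.isSubtree hdom hc)⟩
    rw [descend, dif_neg hq]
    split_ifs with hl hr
    · exact hchild l (.inl rfl) (ihl (hadm.child hconn hdom (.inl rfl)) hl)
    · exact hchild r (.inr rfl) (ihr (hadm.child hconn hdom (.inr rfl)) hr)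
    · exact ⟨falsifiedClause_spec (exists_falsifies_of_unsatBelow_node hconn hpair hadm.isSubtree
        hadm.wellFormed hdom hU hl hr), Finset.empty_subset _⟩

end Descend

section Refutation

variable (φ : CNF) (t : BinaryTree (Finset ℕ))

noncomputable def answer (q : ℕ × Finset Lit) (b : Bool) : (ℕ × Finset Lit) ⊕ Clause :=
  descend φ (topOcc q.1 t) (insert (q.1, b) q.2)

noncomputable def searchNext : (ℕ × Finset Lit) ⊕ Clause →
    (ℕ × ((ℕ × Finset Lit) ⊕ Clause) × ((ℕ × Finset Lit) ⊕ Clause)) ⊕ Clause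
  | .inl q => .inl (q.1, answer φ t q false, answer φ t q true)
  | .inr C => .inr C

noncomputable def searchStates : Finset ((ℕ × Finset Lit) ⊕ Clause) :=
  insert (descend φ t ∅) ((queries φ t ×ˢ Finset.univ).image fun qb => answer φ t qb.1 qb.2)

variable {φ t} {k : ℕ} {q : ℕ × Finset Lit}

lemma searchNext_child {a₀ a₁ : (ℕ × Finset Lit) ⊕ Clause} {x : ℕ}
    (h : searchNext φ t (.inl q) = .inl (x, a₀, a₁)) (b : Bool) :
    x = q.1 ∧ (bif b then a₁ else a₀) = answer φ t q b := by
  simp only [searchNext, Sum.inl.injEq, Prod.mk.injEq] at h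
  obtain ⟨rfl, rfl, rfl⟩ := h
  cases b <;> simp

lemma mem_pending_of_mem_queries (hocc : ∀ x ∈ varsCNF φ, occursV x t) (hq : q ∈ queries φ t) :
    q.1 ∈ pending φ t (.inl q) := by
  obtain ⟨hx, hdom, -, -⟩ := mem_queries.mp hq
  simp only [pending, Finset.mem_sdiff, mem_occVars, hdom, assignedAt, Finset.mem_filter]
  exact ⟨⟨hx, occursV_of_mem_rootBag (topOcc_spec (hocc _ hx)).1⟩, by simp⟩

variable (hocc : ∀ x ∈ varsCNF φ, occursV x t)
  (hpair : ∀ C ∈ φ, ∀ x ∈ varsC C, ∀ y ∈ varsC C, ∃ B ∈ postorder t, x ∈ B ∧ y ∈ B)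
  (hconn : ∀ x, ConnIn x t)
include hocc hpair hconn

lemma answer_spec (hq : q ∈ queries φ t) (b : Bool) :
    Supported φ t (insert (q.1, b) q.2) (answer φ t q b) ∧
      pending φ t (answer φ t q b) ⊆ (pending φ t (.inl q)).erase q.1 := by
  have hU : UnsatBelow φ (topOcc q.1 t) q.2 := (mem_queries.mp hq).2.2.2
  obtain ⟨hsup, hpend⟩ := descend_spec hconn hpair (admissible_query hocc hq b)
    (hU.mono (Finset.subset_insert _ _))
  refine ⟨hsup, hpend.trans fun v hv => ?_⟩
  simp only [pending, varsC_insert, Finset.mem_sdiff, Finset.mem_insert, not_or,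
    Finset.mem_erase] at hv ⊢
  exact ⟨hv.2.1, hv.1, hv.2.2⟩

lemma supported_root (hU : UnsatCNF φ) : Supported φ t ∅ (descend φ t ∅) :=
  (descend_spec hconn hpair admissible_root (unsatBelow_of_unsatCNF hocc hU)).1

lemma mem_queries_of_inl_mem_searchStates (hU : UnsatCNF φ) (hq : .inl q ∈ searchStates φ t) :
    q ∈ queries φ t := by
  obtain ⟨S, hS⟩ : ∃ S, Supported φ t S (.inl q) := by
    rcases Finset.mem_insert.mp hq with hq | hq
    · exact ⟨∅, hq ▸ supported_root hocc hpair hconn hU⟩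
    · obtain ⟨⟨q', b⟩, hq', hq⟩ := Finset.mem_image.mp hq
      exact ⟨_, hq ▸ (answer_spec hocc hpair hconn (Finset.mem_product.mp hq').1 b).1⟩
  exact hS.1

theorem hasRR_searchStates (hU : UnsatCNF φ) : HasRR φ (searchStates φ t).card := by
  have hedge : ∀ a ∈ searchStates φ t, ∀ x a₀ a₁, searchNext φ t a = .inl (x, a₀, a₁) →
      x ∈ pending φ t a ∧ ∀ b : Bool, (bif b then a₁ else a₀) ∈ searchStates φ t ∧
        pending φ t (bif b then a₁ else a₀) ⊆ (pending φ t a).erase x := by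
    rintro (q | C) ha x a₀ a₁ h
    · have hq := mem_queries_of_inl_mem_searchStates hocc hpair hconn hU ha
      obtain ⟨rfl, -⟩ := searchNext_child h false
      refine ⟨mem_pending_of_mem_queries hocc hq, fun b => ?_⟩
      rw [(searchNext_child h b).2]
      exact ⟨Finset.mem_insert_of_mem (Finset.mem_image.mpr ⟨(q, b), by simp [hq], rfl⟩),
        (answer_spec hocc hpair hconn hq b).2⟩
    · simp [searchNext] at h
  have hstep : ∀ S a x a₀ a₁ (b : Bool), Supported φ t S a → searchNext φ t a = .inl (x, a₀, a₁) →
      Supported φ t (insert (x, b) S) (bif b then a₁ else a₀) := by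
    rintro S (q | C) x a₀ a₁ b ⟨hq, hqS⟩ h
    · obtain ⟨rfl, hchild⟩ := searchNext_child h b
      rw [hchild]
      exact (answer_spec hocc hpair hconn hq b).1.mono (Finset.insert_subset_insert _ hqS)
    · simp [searchNext] at h
  refine hasRR_of_ranked (searchStates φ t) (Finset.mem_insert_self _ _)
    (fun a => (pending φ t a).card) (fun a ha x a₀ a₁ h b => ?_)
    (fun a ha L c hp => (hp.nodup_of_potential _ hedge ha).2) (fun L c C hp hc => ?_)
  · obtain ⟨hx, hchild⟩ := hedge a ha x a₀ a₁ h
    exact ⟨(hchild b).1, (Finset.card_le_card (hchild b).2).trans_lt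
      (Finset.card_erase_lt_of_mem hx)⟩
  · have hsup := hp.invariant _ hstep (supported_root hocc hpair hconn hU)
    rcases c with q | C'
    · simp [searchNext] at hc
    · obtain rfl : C' = C := by simpa [searchNext] using hc
      simp only [Finset.empty_union] at hsup
      exact ⟨hsup.1, fun l hl => List.mem_toFinset.mp (hsup.2 l hl)⟩

end Refutation

section Counting

variable {φ : CNF} {t : BinaryTree (Finset ℕ)} {k : ℕ}

lemma card_assignedAt_topOcc_le (hocc : ∀ x ∈ varsCNF φ, occursV x t)
    (hcard : ∀ B ∈ postorder t, B.card ≤ k + 1) {x : ℕ} (hx : x ∈ varsCNF φ) :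
    (assignedAt φ t (topOcc x t) x).card ≤ k := by
  obtain ⟨hxroot, hsub⟩ := topOcc_spec (hocc x hx)
  have hbag := hcard _ (hsub.rootBag_mem_postorder fun h => by simp [h, rootBag] at hxroot)
  have hsubset : assignedAt φ t (topOcc x t) x ⊆ (rootBag (topOcc x t)).erase x := by
    intro y hy
    simp only [assignedAt, bagVars, Finset.mem_filter, Finset.mem_inter] at hy
    refine Finset.mem_erase.mpr ⟨?_, hy.1.1⟩
    rintro rfl
    simp at hy
  calc (assignedAt φ t (topOcc x t) x).card
      ≤ ((rootBag (topOcc x t)).erase x).card := Finset.card_le_card hsubset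
    _ = (rootBag (topOcc x t)).card - 1 := Finset.card_erase_of_mem hxroot
    _ ≤ k := by omega

lemma card_queries_le (hocc : ∀ x ∈ varsCNF φ, occursV x t)
    (hcard : ∀ B ∈ postorder t, B.card ≤ k + 1) :
    (queries φ t).card ≤ (varsCNF φ).card * 2 ^ k := by
  classical
  calc (queries φ t).card
      ≤ ∑ x ∈ varsCNF φ, ((fullAssignments (assignedAt φ t (topOcc x t) x)).image
          (Prod.mk x)).card := (Finset.card_filter_le _ _).trans Finset.card_biUnion_le
    _ ≤ ∑ _x ∈ varsCNF φ, 2 ^ k := Finset.sum_le_sum fun x hx =>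
        Finset.card_image_le.trans (card_fullAssignments_le.trans
          (Nat.pow_le_pow_right two_pos (card_assignedAt_topOcc_le hocc hcard hx)))
    _ = (varsCNF φ).card * 2 ^ k := by rw [Finset.sum_const, smul_eq_mul]

lemma card_searchStates_le : (searchStates φ t).card ≤ 2 * (queries φ t).card + 1 := by
  refine (Finset.card_insert_le _ _).trans (Nat.add_le_add_right ?_ 1)
  refine Finset.card_image_le.trans ?_
  simp [Finset.card_product, mul_comm]

end Counting

theorem stmt15 :
    ∃ c : ℕ, ∀ (φ : CNF) (k : ℕ) (t : Tree (Finset ℕ)),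
      (∀ x ∈ varsCNF φ, occursV x t) →
      (∀ C ∈ φ, ∀ x ∈ varsC C, ∀ y ∈ varsC C, ∃ B ∈ postorder t, x ∈ B ∧ y ∈ B) →
      (∀ x : ℕ, ConnIn x t) →
      (∀ B ∈ postorder t, B.card ≤ k + 1) →
      UnsatCNF φ →
      HasRR φ (c * 2 ^ k * ((varsCNF φ).card + 1)) := by
  refine ⟨2, fun φ k t hocc hpair hconn hcard hU => ?_⟩
  refine (hasRR_searchStates hocc hpair hconn hU).mono ?_
  have hqueries := card_queries_le hocc hcard
  have hpow : 1 ≤ 2 ^ k := Nat.one_le_two_pow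
  calc (searchStates φ t).card ≤ 2 * (queries φ t).card + 1 := card_searchStates_le
    _ ≤ 2 * 2 ^ k * ((varsCNF φ).card + 1) := by nlinarith
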